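/- Let T, S be perfect subtrees of 2^{<ω} and let D ⊆ 2^{<ω} × 2^{<ω} be open dense in the product of two copies of Cohen forcing. Then the set D_{(T,S)} of pairs (t,s) ∈ 𝔸_{𝕊,T} × 𝔸_{𝕊,S} such that for every pair (p,q) of terminal nodes of t and s respectively, (Θ_T(p), Θ_S(q)) ∈ D, is dense in 𝔸_{𝕊,T} × 𝔸_{𝕊,S}. -/

import Mathlib

/-!
Work on each side separately. Identify a condition `t ∈ 𝔸_{𝕊,T}` with an embedded copy of
`2^{≤n}`; above each leaf `m ∈ 2^{n+1}` choose a splitting node `β m` of `T` lying higher than `t`,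
the `β m` pairwise without common extension. Any splitting node above `β m` can then serve as the
new leaf at `m`, and since `Θ_T` is an isomorphism on splitting nodes it can be chosen with
`Θ_T`-image any prescribed extension of the code `Θ_T (β m)`. It therefore suffices to extend the
finitely many codes on both sides so that all pairs land in `D`, which density and openness
achieve one pair at a time.
-/

def IsTree (T : Set (List Bool)) : Prop :=
  ∀ ⦃l m : List Bool⦄, l <+: m → m ∈ T → l ∈ T

def SplitsAt (T : Set (List Bool)) (l : List Bool) : Prop :=
  l ++ [false] ∈ T ∧ l ++ [true] ∈ T

def PerfectTree (T : Set (List Bool)) : Prop :=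
  T.Nonempty ∧ IsTree T ∧ ∀ l ∈ T, ∃ m ∈ T, l <+: m ∧ SplitsAt T m

def splitNodes (T : Set (List Bool)) : Set (List Bool) :=
  {l | l ∈ T ∧ SplitsAt T l}

def FullBin (n : ℕ) : Set (List Bool) := {l | l.length ≤ n}

def IsoTo (t u : Set (List Bool)) : Prop :=
  ∃ e : t ≃ u, ∀ a b : t, (a : List Bool) <+: (b : List Bool) ↔
    ((e a : List Bool) <+: (e b : List Bool))

def SacksAux (S : Set (List Bool)) : Set (Set (List Bool)) :=
  {t | t ⊆ S ∧ t.Finite ∧ ∃ n, IsoTo t (FullBin n)}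

noncomputable def height (t : Set (List Bool)) : ℕ :=
  sSup (List.length '' t)

def EndExt (t s : Set (List Bool)) : Prop :=
  s ⊆ t ∧ ∀ l ∈ t, l.length ≤ height s → l ∈ s

def Term (t : Set (List Bool)) : Set (List Bool) :=
  {p | p ∈ t ∧ ∀ q ∈ t, p <+: q → q = p}

open Set

section ListPrefix

variable {α β : Type*}

theorem prefix_update_of_prefix {ι : Type*} [DecidableEq ι] {F : ι → List α} {i : ι}
    {l : List α} (h : F i <+: l) (j : ι) : F j <+: Function.update F i l j := by
  rcases eq_or_ne j i with rfl | hj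
  · simpa using h
  · simp [hj]

theorem eq_of_prefix_or_prefix_of_length_eq {x y : List α} (h : x <+: y ∨ y <+: x)
    (hlen : x.length = y.length) : x = y := by
  rcases h with h | h
  · exact h.eq_of_length hlen
  · exact (h.eq_of_length hlen.symm).symm

theorem exists_extensions_mem_of_dense {D : Set (List α × List β)}
    (hdense : ∀ a b, ∃ a' b', (a', b') ∈ D ∧ a <+: a' ∧ b <+: b')
    (hopen : ∀ p ∈ D, ∀ a' b', p.1 <+: a' → p.2 <+: b' → (a', b') ∈ D)
    {P : Set (List α × List β)} (hP : P.Finite) :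
    ∃ (F : List α → List α) (G : List β → List β), (∀ a, a <+: F a) ∧ (∀ b, b <+: G b) ∧
      ∀ p ∈ P, (F p.1, G p.2) ∈ D := by
  classical
  induction P, hP using Set.Finite.induction_on with
  | empty => exact ⟨id, id, fun _ => List.prefix_rfl, fun _ => List.prefix_rfl, by simp⟩
  | @insert p P _ _ ih =>
    obtain ⟨F, G, hF, hG, hFG⟩ := ih
    obtain ⟨a', b', hD, ha', hb'⟩ := hdense (F p.1) (G p.2)
    have hF' := prefix_update_of_prefix ha'
    have hG' := prefix_update_of_prefix hb'
    refine ⟨_, _, fun a => (hF a).trans (hF' a), fun b => (hG b).trans (hG' b), ?_⟩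
    rintro q (rfl | hq)
    · simpa using hD
    · exact hopen _ (hFG q hq) _ _ (hF' _) (hG' _)

def IsPrefixEmbeddingOn (f : List α → List β) (A : Set (List α)) : Prop :=
  ∀ x ∈ A, ∀ y ∈ A, f x <+: f y ↔ x <+: y

theorem IsPrefixEmbeddingOn.injOn {f : List α → List β} {A : Set (List α)}
    (hf : IsPrefixEmbeddingOn f A) : InjOn f A := fun x hx y hy h => by
  have hxy := (hf x hx y hy).1 (h ▸ List.prefix_rfl)
  exact hxy.eq_of_length_le ((hf y hy x hx).1 (h ▸ List.prefix_rfl)).length_le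

end ListPrefix

theorem isoTo_iff_exists_prefixEmbeddingOn {t A : Set (List Bool)} :
    IsoTo t A ↔ ∃ f : List Bool → List Bool, f '' A = t ∧ IsPrefixEmbeddingOn f A := by
  constructor
  · rintro ⟨e, he⟩
    classical
    let f : List Bool → List Bool := fun x => if hx : x ∈ A then e.symm ⟨x, hx⟩ else []
    have hf : ∀ x (hx : x ∈ A), f x = e.symm ⟨x, hx⟩ := fun x hx => dif_pos hx
    refine ⟨f, ?_, fun x hx y hy => ?_⟩
    · ext p
      refine ⟨?_, fun hp => ⟨e ⟨p, hp⟩, (e ⟨p, hp⟩).2, by simp [hf]⟩⟩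
      rintro ⟨x, hx, rfl⟩
      simp [hf x hx]
    · simpa [hf x hx, hf y hy] using he (e.symm ⟨x, hx⟩) (e.symm ⟨y, hy⟩)
  · rintro ⟨f, rfl, hf⟩
    let e := Equiv.Set.imageOfInjOn f A hf.injOn
    refine ⟨e.symm, fun a b => ?_⟩
    obtain ⟨x, rfl⟩ := e.surjective a
    obtain ⟨y, rfl⟩ := e.surjective b
    simp only [Equiv.symm_apply_apply]
    exact hf x x.2 y y.2

section FullBin

variable {f g : List Bool → List Bool} {n : ℕ} {x : List Bool}

theorem term_image_fullBin_subset (hf : IsPrefixEmbeddingOn f (FullBin n)) :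
    Term (f '' FullBin n) ⊆ f '' {m | m.length = n} := by
  rintro _ ⟨⟨x, hx, rfl⟩, hterm⟩
  let m := x ++ List.replicate (n - x.length) false
  have hm : m.length = n := by
    simp only [m, List.length_append, List.length_replicate]
    grind [FullBin]
  have hmx : f m = f x :=
    hterm _ ⟨m, hm.le, rfl⟩ ((hf x hx m hm.le).2 (List.prefix_append _ _))
  have : m.length ≤ x.length := ((hf m hm.le x hx).1 (hmx ▸ List.prefix_rfl)).length_le
  exact ⟨x, le_antisymm hx (hm ▸ this), rfl⟩

def extendByLeaves (n : ℕ) (f g : List Bool → List Bool) (x : List Bool) : List Bool :=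
  if x.length ≤ n then f x else g x

theorem extendByLeaves_of_mem (hx : x ∈ FullBin n) : extendByLeaves n f g x = f x := if_pos hx

theorem extendByLeaves_of_length (hx : x.length = n + 1) : extendByLeaves n f g x = g x :=
  if_neg (by omega)

variable (hf : IsPrefixEmbeddingOn f (FullBin n))
  (habove : ∀ m, m.length = n + 1 → f (m.take n) <+: g m)
include hf habove

theorem prefix_leaf_iff {x m : List Bool} (hx : x ∈ FullBin n) (hm : m.length = n + 1) :
    f x <+: g m ↔ x <+: m := by
  have hmn : m.take n ∈ FullBin n := (List.length_take_le _ _)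
  constructor
  · intro h
    suffices x <+: m.take n from this.trans (List.take_prefix _ _)
    rcases List.prefix_or_prefix_of_prefix h (habove m hm) with h' | h'
    · exact (hf x hx _ hmn).1 h'
    · have hmx := (hf _ hmn x hx).1 h'
      rw [hmx.eq_of_length_le (by rw [List.length_take, min_eq_left (by omega)]; exact hx)]
  · intro h
    exact ((hf x hx _ hmn).2 (List.prefix_take_iff.2 ⟨h, hx⟩)).trans (habove m hm)

theorem isPrefixEmbeddingOn_extendByLeaves
    (hlt : ∀ x ∈ FullBin n, ∀ m, m.length = n + 1 → (f x).length < (g m).length)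
    (hinc : ∀ m m', m.length = n + 1 → m'.length = n + 1 → g m <+: g m' → m = m') :
    IsPrefixEmbeddingOn (extendByLeaves n f g) (FullBin (n + 1)) := by
  intro x hx y hy
  by_cases hxn : x ∈ FullBin n <;> by_cases hyn : y ∈ FullBin n
  · rw [extendByLeaves_of_mem hxn, extendByLeaves_of_mem hyn]
    exact hf x hxn y hyn
  · have hy1 : y.length = n + 1 := by grind [FullBin]
    rw [extendByLeaves_of_mem hxn, extendByLeaves_of_length hy1]
    exact prefix_leaf_iff hf habove hxn hy1
  · have hx1 : x.length = n + 1 := by grind [FullBin]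
    rw [extendByLeaves_of_length hx1, extendByLeaves_of_mem hyn]
    refine iff_of_false (fun h => ?_) (fun h => ?_)
    · exact (hlt y hyn x hx1).not_ge h.length_le
    · exact hxn (h.length_le.trans hyn)
  · have hx1 : x.length = n + 1 := by grind [FullBin]
    have hy1 : y.length = n + 1 := by grind [FullBin]
    rw [extendByLeaves_of_length hx1, extendByLeaves_of_length hy1]
    refine ⟨fun h => ?_, fun h => ?_⟩
    · rw [hinc x y hx1 hy1 h]
    · rw [h.eq_of_length (hx1.trans hy1.symm)]

end FullBin

theorem length_le_height {t : Set (List Bool)} (ht : t.Finite) {l : List Bool} (hl : l ∈ t) :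
    l.length ≤ height t :=
  le_csSup (ht.image _).bddAbove ⟨l, hl, rfl⟩

theorem SplitsAt.append_mem {T : Set (List Bool)} {u d : List Bool} (hu : SplitsAt T u)
    (hd : d.length = 1) : u ++ d ∈ T := by
  obtain ⟨b, rfl⟩ := List.length_eq_one_iff.1 hd
  cases b
  exacts [hu.1, hu.2]

theorem PerfectTree.exists_splitNode_le_length {T : Set (List Bool)} (hT : PerfectTree T)
    {l : List Bool} (hl : l ∈ T) (k : ℕ) :
    ∃ u ∈ splitNodes T, l <+: u ∧ k ≤ u.length := by
  induction k with
  | zero =>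
    obtain ⟨u, hu, hlu, hsplit⟩ := hT.2.2 l hl
    exact ⟨u, ⟨hu, hsplit⟩, hlu, Nat.zero_le _⟩
  | succ k ih =>
    obtain ⟨u, ⟨-, hsplit⟩, hlu, hk⟩ := ih
    obtain ⟨v, hv, huv, hvk⟩ := hT.2.2 _ hsplit.1
    refine ⟨v, ⟨hv, hvk⟩, hlu.trans ((List.prefix_append _ _).trans huv), ?_⟩
    have := huv.length_le
    simp only [List.length_append, List.length_singleton] at this
    omega

theorem PerfectTree.exists_leaf_branches {T : Set (List Bool)} (hT : PerfectTree T)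
    {f : List Bool → List Bool} {n : ℕ} (hf : IsPrefixEmbeddingOn f (FullBin n))
    (hfT : f '' FullBin n ⊆ T) (k : ℕ) :
    ∃ β : List Bool → List Bool, ∀ m, m.length = n + 1 →
      β m ∈ splitNodes T ∧ f (m.take n) <+: β m ∧ k < (β m).length ∧
      ∀ m', m'.length = n + 1 → ∀ l, β m <+: l → β m' <+: l → m = m' := by
  choose! u _ hfu hsplit using fun x (hx : x ∈ FullBin n) => hT.2.2 (f x) (hfT ⟨x, hx, rfl⟩)
  have htake : ∀ m : List Bool, m.length = n + 1 → (m.take n).length = n := fun m hm => by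
    simp [hm]
  have hchild : ∀ m : List Bool, m.length = n + 1 → u (m.take n) ++ m.drop n ∈ T :=
    fun m hm => (hsplit _ (htake m hm).le).append_mem (by simp [hm])
  choose! β hβ hcβ hkβ using fun m (hm : m.length = n + 1) =>
    hT.exists_splitNode_le_length (hchild m hm) (k + 1)
  have hfβ : ∀ m : List Bool, m.length = n + 1 → f (m.take n) <+: β m := fun m hm =>
    (hfu _ (htake m hm).le).trans ((List.prefix_append _ _).trans (hcβ m hm))
  refine ⟨β, fun m hm => ⟨hβ m hm, hfβ m hm, hkβ m hm, fun m' hm' l hl hl' => ?_⟩⟩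
  have hsame_take : m.take n = m'.take n := by
    refine eq_of_prefix_or_prefix_of_length_eq ?_ (by rw [htake m hm, htake m' hm'])
    rw [← hf _ (htake m hm).le _ (htake m' hm').le, ← hf _ (htake m' hm').le _ (htake m hm).le]
    exact List.prefix_or_prefix_of_prefix ((hfβ m hm).trans hl) ((hfβ m' hm').trans hl')
  have hsame_drop : m.drop n = m'.drop n := by
    have := eq_of_prefix_or_prefix_of_length_eq
      (List.prefix_or_prefix_of_prefix ((hcβ m hm).trans hl) ((hcβ m' hm').trans hl'))
      (by simp [hsame_take, hm, hm'])
    rw [hsame_take] at this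
    exact List.append_cancel_left this
  rw [← List.take_append_drop n m, hsame_take, hsame_drop, List.take_append_drop]

theorem exists_endExt_term_subset_of_leaves {T : Set (List Bool)} {f g : List Bool → List Bool}
    {n : ℕ} (hf : IsPrefixEmbeddingOn f (FullBin n)) (hfT : f '' FullBin n ⊆ T)
    (hgT : ∀ m, m.length = n + 1 → g m ∈ T)
    (habove : ∀ m, m.length = n + 1 → f (m.take n) <+: g m)
    (hhigh : ∀ m, m.length = n + 1 → height (f '' FullBin n) < (g m).length)
    (hinc : ∀ m m', m.length = n + 1 → m'.length = n + 1 → g m <+: g m' → m = m') :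
    ∃ t' ∈ SacksAux T, EndExt t' (f '' FullBin n) ∧ Term t' ⊆ g '' {m | m.length = n + 1} := by
  have hlt : ∀ x ∈ FullBin n, ∀ m, m.length = n + 1 → (f x).length < (g m).length :=
    fun x hx m hm =>
      (length_le_height ((List.finite_length_le _ n).image f) ⟨x, hx, rfl⟩).trans_lt (hhigh m hm)
  have hemb := isPrefixEmbeddingOn_extendByLeaves hf habove hlt hinc
  have hleaf : ∀ x ∈ FullBin (n + 1), x ∉ FullBin n → x.length = n + 1 := by grind [FullBin]
  refine ⟨extendByLeaves n f g '' FullBin (n + 1),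
    ⟨?_, (List.finite_length_le _ _).image _, n + 1,
      isoTo_iff_exists_prefixEmbeddingOn.2 ⟨_, rfl, hemb⟩⟩,
    ⟨?_, ?_⟩, (term_image_fullBin_subset hemb).trans ?_⟩
  · rintro _ ⟨x, hx, rfl⟩
    by_cases hxn : x ∈ FullBin n
    · rw [extendByLeaves_of_mem hxn]
      exact hfT ⟨x, hxn, rfl⟩
    · rw [extendByLeaves_of_length (hleaf x hx hxn)]
      exact hgT x (hleaf x hx hxn)
  · rintro _ ⟨x, hx, rfl⟩
    exact ⟨x, Nat.le_succ_of_le hx, extendByLeaves_of_mem hx⟩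
  · rintro _ ⟨x, hx, rfl⟩ hle
    by_cases hxn : x ∈ FullBin n
    · exact ⟨x, hxn, (extendByLeaves_of_mem hxn).symm⟩
    · rw [extendByLeaves_of_length (hleaf x hx hxn)] at hle
      exact absurd hle (hhigh x (hleaf x hx hxn)).not_ge
  · rintro _ ⟨m, hm, rfl⟩
    exact ⟨m, hm, (extendByLeaves_of_length hm).symm⟩

theorem PerfectTree.exists_codes_of_sacksAux {T : Set (List Bool)} (hT : PerfectTree T)
    {Θ : List Bool → List Bool} (hsurj : SurjOn Θ (splitNodes T) univ)
    (hmono : ∀ a ∈ splitNodes T, ∀ b ∈ splitNodes T, Θ a <+: Θ b → a <+: b)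
    {t : Set (List Bool)} (ht : t ∈ SacksAux T) :
    ∃ A : Set (List Bool), A.Finite ∧ ∀ F : List Bool → List Bool, (∀ a, a <+: F a) →
      ∃ t' ∈ SacksAux T, EndExt t' t ∧ ∀ p ∈ Term t', ∃ a ∈ A, Θ p = F a := by
  obtain ⟨htT, -, n, hiso⟩ := ht
  obtain ⟨f, rfl, hf⟩ := isoTo_iff_exists_prefixEmbeddingOn.1 hiso
  obtain ⟨β, hβ⟩ := hT.exists_leaf_branches hf htT (height (f '' FullBin n))
  refine ⟨(Θ ∘ β) '' {m | m.length = n + 1}, (List.finite_length_eq _ _).image _, fun F hF => ?_⟩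
  choose g hg hgΘ using fun m => hsurj (mem_univ (F (Θ (β m))))
  have hβg : ∀ m, m.length = n + 1 → β m <+: g m := fun m hm =>
    hmono _ (hβ m hm).1 _ (hg m) (hgΘ m ▸ hF _)
  obtain ⟨t', ht', hext, hterm⟩ := exists_endExt_term_subset_of_leaves hf htT
    (fun m _ => (hg m).1) (fun m hm => (hβ m hm).2.1.trans (hβg m hm))
    (fun m hm => (hβ m hm).2.2.1.trans_le (hβg m hm).length_le)
    (fun m m' hm hm' h => (hβ m hm).2.2.2 m' hm' _ ((hβg m hm).trans h) (hβg m' hm'))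
  refine ⟨t', ht', hext, fun p hp => ?_⟩
  obtain ⟨m, hm, rfl⟩ := hterm hp
  exact ⟨_, ⟨m, hm, rfl⟩, hgΘ m⟩

/-- Let `T`, `S` be perfect trees with canonical splitting-node isomorphisms
`Θ_T`, `Θ_S` onto `2^{<ω}`, and let `D` be open dense in the product of two
copies of Cohen forcing. Then the set `D_{(T,S)}` of pairs `(t, s)` of auxiliary
conditions all of whose pairs of terminal nodes land (via `(Θ_T, Θ_S)`) in `D`
is dense in `𝔸_{𝕊,T} × 𝔸_{𝕊,S}` (with the componentwise order). -/
theorem sacksAux_product_dense (T S : Set (List Bool))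
    (hT : PerfectTree T) (hS : PerfectTree S)
    (ΘT ΘS : List Bool → List Bool)
    (hTbij : Set.BijOn ΘT (splitNodes T) Set.univ)
    (hTord : ∀ a ∈ splitNodes T, ∀ b ∈ splitNodes T, (a <+: b ↔ ΘT a <+: ΘT b))
    (hSbij : Set.BijOn ΘS (splitNodes S) Set.univ)
    (hSord : ∀ a ∈ splitNodes S, ∀ b ∈ splitNodes S, (a <+: b ↔ ΘS a <+: ΘS b))
    (D : Set (List Bool × List Bool))
    (hDdense : ∀ a b : List Bool, ∃ a' b' : List Bool, (a', b') ∈ D ∧ a <+: a' ∧ b <+: b')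
    (hDopen : ∀ p ∈ D, ∀ a' b' : List Bool, p.1 <+: a' → p.2 <+: b' → (a', b') ∈ D) :
    ∀ t ∈ SacksAux T, ∀ s ∈ SacksAux S,
      ∃ t' ∈ SacksAux T, ∃ s' ∈ SacksAux S, EndExt t' t ∧ EndExt s' s ∧
        ∀ p ∈ Term t', ∀ q ∈ Term s', (ΘT p, ΘS q) ∈ D := by
  intro t ht s hs
  obtain ⟨A, hA, hAext⟩ := hT.exists_codes_of_sacksAux hTbij.surjOn
    (fun a ha b hb => (hTord a ha b hb).2) ht
  obtain ⟨B, hB, hBext⟩ := hS.exists_codes_of_sacksAux hSbij.surjOn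
    (fun a ha b hb => (hSord a ha b hb).2) hs
  obtain ⟨F, G, hF, hG, hFG⟩ := exists_extensions_mem_of_dense hDdense hDopen (hA.prod hB)
  obtain ⟨t', ht', htt', htermt⟩ := hAext F hF
  obtain ⟨s', hs', hss', hterms⟩ := hBext G hG
  refine ⟨t', ht', s', hs', htt', hss', fun p hp q hq => ?_⟩
  obtain ⟨a, ha, hpa⟩ := htermt p hp
  obtain ⟨b, hb, hqb⟩ := hterms q hq
  rw [hpa, hqb]
  exact hFG (a, b) ⟨ha, hb⟩
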